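/- Let μ ∈ ℝ^d with μ ≠ 0, let σ > 0, and let P_{μ,σ} be the distribution on ℝ^d given by the equal-weight mixture of the Gaussians N(μ, σ²I) and N(−μ, σ²I). Define U(w) = E_{X∼P_{μ,σ}}[r(|⟨w, X⟩|)], where r is the ramp loss, and let w* = μ/‖μ‖₂. Then for every w ∈ ℝ^d with ‖w‖₂ ≤ 1, ‖w − w*‖₂ < 1, and w ≠ w*, we have U(w*) < U(w); that is, w* is the strict minimizer of U over this set. -/

import Mathlib

open MeasureTheory Real Set
open scoped ENNReal NNReal
open RealInnerProductSpace

noncomputable section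

/-- `ℝ^d` with the Euclidean norm. -/
abbrev Euc (d : ℕ) : Type := EuclideanSpace ℝ (Fin d)

/-- The ramp loss: `r(m) = 1` for `m ≤ 0`, `1 - m` for `0 ≤ m ≤ 1`, `0` for `m ≥ 1`. -/
def ramp (m : ℝ) : ℝ := max 0 (min 1 (1 - m))

/-- Density of the Gaussian `N(μ, σ²I)` on `ℝ^d`. -/
def gaussDen {d : ℕ} (μ : Euc d) (σ : ℝ) (x : Euc d) : ℝ :=
  (2 * Real.pi * σ ^ 2) ^ (-(d : ℝ) / 2) * Real.exp (-‖x - μ‖ ^ 2 / (2 * σ ^ 2))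

/-- `P_{μ,σ}`: equal-weight mixture of the Gaussians `N(μ, σ²I)` and `N(-μ, σ²I)` on `ℝ^d`. -/
def gaussMix {d : ℕ} (μ : Euc d) (σ : ℝ) : Measure (Euc d) :=
  volume.withDensity fun x => ENNReal.ofReal ((gaussDen μ σ x + gaussDen (-μ) σ x) / 2)

/-- The unlabeled self-training loss `U(w, P_{μ,σ}) = E_{X ∼ P_{μ,σ}}[r(|⟨w, X⟩|)]`. -/
def unlabLoss {d : ℕ} (w μ : Euc d) (σ : ℝ) : ℝ :=
  ∫ x, ramp |(inner ℝ w x : ℝ)| ∂(gaussMix μ σ)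

def tent (m : ℝ) : ℝ := max 0 (1 - |m|)

lemma ramp_abs (m : ℝ) : ramp |m| = tent m := by
  unfold ramp tent
  rw [min_eq_right (by have := abs_nonneg m; linarith)]

lemma tent_nonneg (m : ℝ) : 0 ≤ tent m := le_max_left _ _
lemma tent_le_one (m : ℝ) : tent m ≤ 1 := by
  unfold tent; have := abs_nonneg m
  exact max_le (by norm_num) (by linarith)
lemma tent_continuous : Continuous tent :=
  continuous_const.max (continuous_const.sub (continuous_abs))
lemma tent_anti {p q : ℝ} (h : |p| ≤ |q|) : tent q ≤ tent p :=
  max_le_max le_rfl (by linarith)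
lemma tent_zero : tent 0 = 1 := by unfold tent; norm_num
lemma tent_lt {q : ℝ} (h : 0 < |q|) : tent q < tent 0 := by
  rw [tent_zero]; unfold tent
  exact max_lt (by norm_num) (by linarith)

variable {σ : ℝ}

/-- unnormalized 1-d Gaussian density centered at `a`. -/
def G (σ a t : ℝ) : ℝ := Real.exp (-(t - a) ^ 2 / (2 * σ ^ 2))

lemma G_pos (a t : ℝ) : 0 < G σ a t := Real.exp_pos _
lemma G_continuous (a : ℝ) : Continuous (G σ a) := by
  unfold G; fun_prop

lemma G_le_G (hσ : 0 < σ) {a b t : ℝ} (h : (t - b) ^ 2 ≤ (t - a) ^ 2) :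
    G σ a t ≤ G σ b t := by
  unfold G
  apply Real.exp_le_exp.2
  rw [div_le_div_iff_of_pos_right (by positivity)]
  linarith

lemma G_lt_G (hσ : 0 < σ) {a b t : ℝ} (h : (t - b) ^ 2 < (t - a) ^ 2) :
    G σ a t < G σ b t := by
  unfold G
  apply Real.exp_lt_exp.2
  rw [div_lt_div_iff_of_pos_right (by positivity)]
  linarith

lemma integrable_G (hσ : 0 < σ) (a : ℝ) : Integrable (G σ a) := by
  unfold G
  have h : (fun t => Real.exp (-(t - a) ^ 2 / (2 * σ ^ 2)))
      = (fun t => Real.exp (-(1/(2*σ^2)) * t ^ 2)) ∘ (fun t => t - a) := by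
    funext t; simp only [Function.comp_apply]; ring_nf
  rw [h]
  exact (integrable_exp_neg_mul_sq (by positivity)).comp_sub_right a

lemma integrable_tent_mul (hσ : 0 < σ) (a : ℝ) {e : ℝ → ℝ} (he : Continuous e) :
    Integrable (fun t => tent (e t) * G σ a t) := by
  apply Integrable.mono' (integrable_G hσ a)
    ((tent_continuous.comp he).mul (G_continuous a)).aestronglyMeasurable
  filter_upwards with t
  simp only [Pi.mul_apply, Function.comp_apply]
  rw [Real.norm_eq_abs, abs_mul, abs_of_nonneg (tent_nonneg _), abs_of_pos (G_pos a t)]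
  calc tent (e t) * G σ a t ≤ 1 * G σ a t :=
        mul_le_mul_of_nonneg_right (tent_le_one _) (G_pos a t).le
    _ = G σ a t := one_mul _

/-- The key one-dimensional integral. -/
def K (σ s a : ℝ) : ℝ := ∫ t, tent (s * t) * G σ a t

/-- `K` is strictly decreasing in the mean parameter on `[0, ∞)`. -/
lemma K_strictAnti (hσ : 0 < σ) {s a a' : ℝ} (hs : 0 < s) (ha : 0 ≤ a) (haa : a < a') :
    K σ s a' < K σ s a := by
  obtain ⟨m, δ, hm, hδ, hA, hA'⟩ :
      ∃ m δ : ℝ, 0 < m ∧ 0 < δ ∧ a - m = -δ ∧ a' - m = δ :=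
    ⟨(a + a') / 2, (a' - a) / 2, by linarith, by linarith, by ring, by ring⟩
  have key : ∀ c : ℝ, K σ s c = ∫ u, tent (s * (u + m)) * G σ (c - m) u := by
    intro c
    rw [K, ← integral_add_right_eq_self (fun t => tent (s * t) * G σ c t) m]
    refine integral_congr_ae (Filter.Eventually.of_forall fun u => ?_)
    simp only; congr 1
    unfold G; ring_nf
  have ha_eq : K σ s a = ∫ u, tent (s * (u + m)) * G σ (-δ) u := by rw [key a, hA]
  have ha'_eq : K σ s a' = ∫ u, tent (s * (u + m)) * G σ δ u := by rw [key a', hA']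
  have hint1 := integrable_tent_mul hσ (-δ) (e := fun u => s * (u + m)) (by fun_prop)
  have hint2 := integrable_tent_mul hσ δ (e := fun u => s * (u + m)) (by fun_prop)
  have hhint : Integrable (fun u => tent (s * (u + m)) * (G σ (-δ) u - G σ δ u)) := by
    refine (hint1.sub hint2).congr (Filter.Eventually.of_forall fun u => ?_)
    simp only [Pi.sub_apply]; ring
  have hdiff : K σ s a - K σ s a'
      = ∫ u, tent (s * (u + m)) * (G σ (-δ) u - G σ δ u) := by
    rw [ha_eq, ha'_eq, ← integral_sub hint1 hint2]
    refine integral_congr_ae (Filter.Eventually.of_forall fun u => ?_)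
    simp only [Pi.sub_apply]; ring
  have hfold : ∀ u : ℝ,
      tent (s * (-u + m)) * (G σ (-δ) (-u) - G σ δ (-u))
        + tent (s * (u + m)) * (G σ (-δ) u - G σ δ u)
      = (tent (s * (m - u)) - tent (s * (m + u))) * (G σ δ u - G σ (-δ) u) := by
    intro u
    have e1 : G σ (-δ) (-u) = G σ δ u := by unfold G; ring_nf
    have e2 : G σ δ (-u) = G σ (-δ) u := by unfold G; ring_nf
    rw [e1, e2]
    have e3 : s * (-u + m) = s * (m - u) := by ring
    have e4 : s * (u + m) = s * (m + u) := by ring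
    rw [e3, e4]; ring
  have hsplit : K σ s a - K σ s a'
      = ∫ u in Ioi (0:ℝ),
          (tent (s * (m - u)) - tent (s * (m + u))) * (G σ δ u - G σ (-δ) u) := by
    rw [hdiff, ← intervalIntegral.integral_Iic_add_Ioi (b := (0:ℝ)) hhint.integrableOn hhint.integrableOn]
    have hneg : ∫ u in Iic (0:ℝ), tent (s * (u + m)) * (G σ (-δ) u - G σ δ u)
        = ∫ u in Ioi (0:ℝ), tent (s * (-u + m)) * (G σ (-δ) (-u) - G σ δ (-u)) := by
      have hcn := integral_comp_neg_Ioi (0:ℝ)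
        (fun u => tent (s * (u + m)) * (G σ (-δ) u - G σ δ u))
      simp only [neg_zero] at hcn
      rw [← hcn]
    rw [hneg, ← integral_add (hhint.comp_neg.integrableOn) hhint.integrableOn]
    exact setIntegral_congr_fun measurableSet_Ioi fun u _ => hfold u
  set D : ℝ → ℝ :=
    fun u => (tent (s * (m - u)) - tent (s * (m + u))) * (G σ δ u - G σ (-δ) u) with hD
  have hDnonneg : ∀ u : ℝ, 0 ≤ D u := by
    intro u
    rcases le_total 0 u with hu | hu
    · apply mul_nonneg
      · rw [sub_nonneg]
        apply tent_anti
        rw [abs_mul, abs_mul]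
        refine mul_le_mul_of_nonneg_left ?_ (abs_nonneg s)
        rw [abs_of_nonneg (by linarith : (0:ℝ) ≤ m + u), abs_le]
        constructor <;> linarith
      · rw [sub_nonneg]
        exact G_le_G hσ (by nlinarith)
    · rw [mul_nonneg_iff]
      right
      constructor
      · rw [sub_nonpos]
        apply tent_anti
        rw [abs_mul, abs_mul]
        refine mul_le_mul_of_nonneg_left ?_ (abs_nonneg s)
        rw [abs_of_nonneg (by linarith : (0:ℝ) ≤ m - u), abs_le]
        constructor <;> linarith
      · rw [sub_nonpos]
        exact G_le_G hσ (by nlinarith)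
  have hDcont : Continuous D := by
    apply Continuous.mul
    · exact (tent_continuous.comp (by fun_prop)).sub (tent_continuous.comp (by fun_prop))
    · exact (G_continuous δ).sub (G_continuous (-δ))
  have hDm : 0 < D m := by
    have h1 : tent (s * (m + m)) < tent (s * (m - m)) := by
      rw [sub_self, mul_zero, tent_zero, ← tent_zero]
      exact tent_lt (abs_pos.mpr (by positivity))
    have h2 : G σ (-δ) m < G σ δ m := G_lt_G hσ (by nlinarith)
    exact mul_pos (by linarith) (by linarith)
  have hDint : Integrable D := by
    apply Integrable.mono' ((integrable_G hσ δ).add (integrable_G hσ (-δ)))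
      hDcont.aestronglyMeasurable
    filter_upwards with u
    rw [Real.norm_eq_abs, hD]
    have t1 := tent_nonneg (s * (m - u)); have t2 := tent_nonneg (s * (m + u))
    have t3 := tent_le_one (s * (m - u)); have t4 := tent_le_one (s * (m + u))
    have g1 := (G_pos (σ := σ) δ u); have g2 := (G_pos (σ := σ) (-δ) u)
    rw [abs_mul]
    calc |tent (s * (m - u)) - tent (s * (m + u))| * |G σ δ u - G σ (-δ) u|
        ≤ 1 * (G σ δ u + G σ (-δ) u) := by
          apply mul_le_mul (by rw [abs_le]; constructor <;> linarith)
            (by rw [abs_le]; constructor <;> linarith) (abs_nonneg _) zero_le_one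
      _ = G σ δ u + G σ (-δ) u := one_mul _
  have hpos : 0 < ∫ u in Ioi (0:ℝ), D u := by
    rw [integral_pos_iff_support_of_nonneg (fun u => hDnonneg u) hDint.integrableOn]
    have hopen : IsOpen {u : ℝ | 0 < D u} := isOpen_lt continuous_const hDcont
    calc (0:ℝ≥0∞) < volume ({u : ℝ | 0 < D u} ∩ Ioi 0) :=
          (hopen.inter isOpen_Ioi).measure_pos volume ⟨m, hDm, hm⟩
      _ = volume.restrict (Ioi 0) {u : ℝ | 0 < D u} :=
          (Measure.restrict_apply hopen.measurableSet).symm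
      _ ≤ volume.restrict (Ioi 0) (Function.support D) :=
          measure_mono fun u hu => ne_of_gt hu
  have : 0 < K σ s a - K σ s a' := by rw [hsplit]; exact hpos
  linarith

lemma K_anti (hσ : 0 < σ) {s a a' : ℝ} (hs : 0 < s) (ha : 0 ≤ a) (haa : a ≤ a') :
    K σ s a' ≤ K σ s a := by
  rcases eq_or_lt_of_le haa with rfl | h
  · exact le_rfl
  · exact (K_strictAnti hσ hs ha h).le

/-- `K` at slope `1` is strictly less than at slope `s < 1`. -/
lemma K_one_lt (hσ : 0 < σ) (A : ℝ) {s : ℝ} (hs0 : 0 < s) (hs : s < 1) :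
    K σ 1 A < K σ s A := by
  have hint1 := integrable_tent_mul hσ A (e := fun t => 1 * t) (by fun_prop)
  have hint2 := integrable_tent_mul hσ A (e := fun t => s * t) (by fun_prop)
  have hdiff : K σ s A - K σ 1 A = ∫ t, (tent (s * t) - tent (1 * t)) * G σ A t := by
    rw [K, K, ← integral_sub hint2 hint1]
    refine integral_congr_ae (Filter.Eventually.of_forall fun u => ?_)
    simp only [Pi.sub_apply]; ring
  set D : ℝ → ℝ := fun t => (tent (s * t) - tent (1 * t)) * G σ A t with hD
  have hDnonneg : ∀ t : ℝ, 0 ≤ D t := by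
    intro t
    apply mul_nonneg ?_ (G_pos A t).le
    rw [sub_nonneg]
    apply tent_anti
    rw [abs_mul, abs_mul, abs_of_pos hs0, abs_one]
    exact mul_le_mul_of_nonneg_right hs.le (abs_nonneg t)
  have hDcont : Continuous D :=
    ((tent_continuous.comp (by fun_prop)).sub (tent_continuous.comp (by fun_prop))).mul
      (G_continuous A)
  have hDone : 0 < D 1 := by
    have h1 : tent (1 * 1) = 0 := by norm_num [tent]
    have h2 : 0 < tent (s * 1) := by
      simp only [mul_one, tent, abs_of_pos hs0]
      exact lt_max_of_lt_right (by linarith)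
    exact mul_pos (by rw [h1]; linarith) (G_pos A 1)
  have hDint : Integrable D := by
    refine (hint2.sub hint1).congr (Filter.Eventually.of_forall fun u => ?_)
    simp only [Pi.sub_apply]; ring
  have hpos : 0 < ∫ t, D t := by
    rw [integral_pos_iff_support_of_nonneg (fun u => hDnonneg u) hDint]
    have hopen : IsOpen {u : ℝ | 0 < D u} := isOpen_lt continuous_const hDcont
    calc (0:ℝ≥0∞) < volume {u : ℝ | 0 < D u} := hopen.measure_pos volume ⟨1, hDone⟩
      _ ≤ volume (Function.support D) := measure_mono fun u hu => ne_of_gt hu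
  have : 0 < K σ s A - K σ 1 A := by rw [hdiff]; exact hpos
  linarith

lemma integral_G (hσ : 0 < σ) (a : ℝ) : ∫ t, G σ a t = Real.sqrt (2 * π * σ ^ 2) := by
  have h : (∫ t, G σ a t)
      = ∫ t, (fun u => Real.exp (-(1/(2*σ^2)) * u ^ 2)) (t - a) := by
    refine integral_congr_ae (Filter.Eventually.of_forall fun t => ?_)
    simp only [G]; ring_nf
  rw [h, integral_sub_right_eq_self (fun u => Real.exp (-(1/(2*σ^2)) * u ^ 2)) a,
    integral_gaussian]
  congr 1
  field_simp

lemma C_mul_sqrt (hσ : 0 < σ) :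
    (2 * π * σ ^ 2) ^ (-(1:ℝ)/2) * Real.sqrt (2 * π * σ ^ 2) = 1 := by
  have hA : (0:ℝ) < 2 * π * σ ^ 2 := by positivity
  rw [Real.sqrt_eq_rpow, ← Real.rpow_add hA]
  norm_num

lemma norm_sq_euc {d : ℕ} (v : Euc d) : ‖v‖ ^ 2 = ∑ i, (v i) ^ 2 := by
  rw [EuclideanSpace.norm_eq, Real.sq_sqrt (by positivity)]
  refine Finset.sum_congr rfl fun i _ => by rw [Real.norm_eq_abs, sq_abs]

lemma reduce {d : ℕ} (hσ : 0 < σ) (hd : 0 < d) (w ν : Euc d) (hw : w ≠ 0) :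
    (∫ x, ramp |(inner ℝ w x : ℝ)| * gaussDen ν σ x)
      = (2 * π * σ ^ 2) ^ (-(1:ℝ)/2) * K σ ‖w‖ ((inner ℝ w ν : ℝ) / ‖w‖) := by
  haveI : NeZero d := ⟨hd.ne'⟩
  have hw0 : 0 < ‖w‖ := norm_pos_iff.mpr hw
  set e : Euc d := ‖w‖⁻¹ • w with he_def
  have he : ‖e‖ = 1 := by
    rw [he_def, norm_smul, norm_inv, norm_norm, inv_mul_cancel₀ hw0.ne']
  obtain ⟨b, hb⟩ : ∃ b : OrthonormalBasis (Fin d) ℝ (Euc d),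
      ∀ i ∈ ({0} : Set (Fin d)), b i = (fun _ : Fin d => e) i := by
    apply Orthonormal.exists_orthonormalBasis_extension_of_card_eq
    · simp
    constructor
    · intro i; simpa using he
    · rintro ⟨i, hi⟩ ⟨j, hj⟩ hij
      simp only [Set.mem_singleton_iff] at hi hj
      exact absurd (Subtype.ext (hi.trans hj.symm)) hij
  have hb0 : b 0 = e := hb 0 rfl
  have hwe : w = ‖w‖ • e := by
    rw [he_def, smul_smul, mul_inv_cancel₀ hw0.ne', one_smul]
  set c : Euc d := b.repr ν with hc_def
  -- step 1 : rotate
  have step1 : (∫ x, ramp |(inner ℝ w x : ℝ)| * gaussDen ν σ x)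
      = ∫ y : Euc d, tent (‖w‖ * y 0) * gaussDen c σ y := by
    rw [← b.measurePreserving_repr_symm.integral_comp
      (b.repr.symm.toHomeomorph.measurableEmbedding)
      (fun x => ramp |(inner ℝ w x : ℝ)| * gaussDen ν σ x)]
    refine integral_congr_ae (Filter.Eventually.of_forall fun y => ?_)
    have h1 : (inner ℝ w (b.repr.symm y) : ℝ) = ‖w‖ * y 0 := by
      conv_lhs => rw [hwe]
      rw [real_inner_smul_left, ← hb0, ← b.repr_apply_apply,
        LinearIsometryEquiv.apply_symm_apply]
    have h2 : ‖b.repr.symm y - ν‖ = ‖y - c‖ := by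
      conv_lhs => rw [show ν = b.repr.symm c by rw [hc_def, LinearIsometryEquiv.symm_apply_apply]]
      rw [← map_sub, LinearIsometryEquiv.norm_map]
    simp only
    rw [h1, ramp_abs]
    congr 1
    unfold gaussDen
    rw [h2]
  -- step 2 : to Pi coordinates
  set ψ := (MeasurableEquiv.toLp 2 (Fin d → ℝ)).symm.symm with hψ_def
  have step2 : (∫ y : Euc d, tent (‖w‖ * y 0) * gaussDen c σ y)
      = ∫ z : Fin d → ℝ, tent (‖w‖ * z 0) * gaussDen c σ (ψ z) := by
    rw [← ((EuclideanSpace.volume_preserving_symm_measurableEquiv_toLp (Fin d)).symm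
        (MeasurableEquiv.toLp 2 (Fin d → ℝ)).symm).integral_comp
      (MeasurableEquiv.measurableEmbedding _)
      (fun y => tent (‖w‖ * y 0) * gaussDen c σ y)]
    refine integral_congr_ae (Filter.Eventually.of_forall fun z => ?_)
    have h0 : (ψ z) 0 = z 0 := rfl
    simp only [h0]
    rfl
  -- step 3 : product structure
  set f : Fin d → ℝ → ℝ := fun i t =>
    (if i = 0 then tent (‖w‖ * t) else 1) * ((2 * π * σ ^ 2) ^ (-(1:ℝ)/2) * G σ (c i) t)
    with hf_def
  have hA : (0:ℝ) < 2 * π * σ ^ 2 := by positivity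
  have hprod : ∀ z : Fin d → ℝ,
      tent (‖w‖ * z 0) * gaussDen c σ (ψ z) = ∏ i, f i (z i) := by
    intro z
    have hsub : ∀ i, (ψ z - c) i = z i - c i := fun i => rfl
    have hnorm : ‖ψ z - c‖ ^ 2 = ∑ i, (z i - c i) ^ 2 := by
      rw [norm_sq_euc]
      exact Finset.sum_congr rfl fun i _ => by rw [hsub i]
    simp only [hf_def]
    rw [Finset.prod_mul_distrib, Finset.prod_ite_eq' Finset.univ (0 : Fin d)
      (fun i => tent (‖w‖ * z i))]
    simp only [Finset.mem_univ, if_true]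
    congr 1
    unfold gaussDen G
    rw [Finset.prod_mul_distrib, Finset.prod_const, hnorm]
    have hC : (2 * π * σ ^ 2) ^ (-(d : ℝ) / 2)
        = ((2 * π * σ ^ 2) ^ (-(1:ℝ)/2)) ^ (d : ℕ) := by
      rw [← Real.rpow_natCast ((2 * π * σ ^ 2) ^ (-(1:ℝ)/2)) d, ← Real.rpow_mul hA.le]
      congr 1
      push_cast; ring
    rw [hC, Finset.card_univ, Fintype.card_fin]
    congr 1
    rw [← Real.exp_sum]
    congr 1
    rw [← Finset.sum_div, ← Finset.sum_neg_distrib]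
  -- step 4 : Fubini
  have step4 : (∫ z : Fin d → ℝ, tent (‖w‖ * z 0) * gaussDen c σ (ψ z))
      = ∏ i, ∫ t, f i t := by
    rw [← MeasureTheory.integral_fintype_prod_volume_eq_prod (ι := Fin d) f]
    exact integral_congr_ae (Filter.Eventually.of_forall fun z => hprod z)
  -- step 5 : evaluate the product
  have hone : ∀ i : Fin d, i ≠ 0 → (∫ t, f i t) = 1 := by
    intro i hi
    simp only [hf_def, if_neg hi, one_mul]
    rw [integral_const_mul, integral_G hσ, C_mul_sqrt hσ]
  have hzero : (∫ t, f 0 t) = (2 * π * σ ^ 2) ^ (-(1:ℝ)/2) * K σ ‖w‖ (c 0) := by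
    simp only [hf_def, eq_self_iff_true, if_true]
    rw [show (fun t => tent (‖w‖ * t) * ((2 * π * σ ^ 2) ^ (-(1:ℝ)/2) * G σ (c 0) t))
        = fun t => (2 * π * σ ^ 2) ^ (-(1:ℝ)/2) * (tent (‖w‖ * t) * G σ (c 0) t) by
      funext t; ring]
    rw [integral_const_mul, K]
  have hc0 : c 0 = (inner ℝ w ν : ℝ) / ‖w‖ := by
    rw [hc_def, b.repr_apply_apply, hb0, he_def, real_inner_smul_left, div_eq_inv_mul]
  rw [step1, step2, step4, Fintype.prod_eq_single (0 : Fin d) hone, hzero, hc0]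

lemma tent_neg (m : ℝ) : tent (-m) = tent m := by unfold tent; rw [abs_neg]

lemma K_even (s a : ℝ) : K σ s (-a) = K σ s a := by
  unfold K
  rw [← integral_neg_eq_self (fun t => tent (s * t) * G σ (-a) t)]
  refine integral_congr_ae (Filter.Eventually.of_forall fun t => ?_)
  simp only
  rw [show s * -t = -(s * t) by ring, tent_neg]
  congr 1
  unfold G; ring_nf

lemma gaussDen_continuous {d : ℕ} (ν : Euc d) (hσ : 0 < σ) : Continuous (gaussDen ν σ) := by
  unfold gaussDen
  fun_prop

lemma ramp_continuous : Continuous ramp :=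
  continuous_const.max (continuous_const.min (continuous_const.sub continuous_id))

lemma gaussDen_pos {d : ℕ} (hσ : 0 < σ) (ν : Euc d) (x : Euc d) : 0 < gaussDen ν σ x := by
  unfold gaussDen
  have hA : (0:ℝ) < 2 * π * σ ^ 2 := by positivity
  exact mul_pos (Real.rpow_pos_of_pos hA _) (Real.exp_pos _)

lemma integrable_gaussDen {d : ℕ} (hσ : 0 < σ) (ν : Euc d) :
    Integrable (gaussDen ν σ) := by
  set ψ := (MeasurableEquiv.toLp 2 (Fin d → ℝ)).symm.symm with hψ_def
  rw [← ((EuclideanSpace.volume_preserving_symm_measurableEquiv_toLp (Fin d)).symm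
      (MeasurableEquiv.toLp 2 (Fin d → ℝ)).symm).integrable_comp_emb
    (MeasurableEquiv.measurableEmbedding _)]
  have hA : (0:ℝ) < 2 * π * σ ^ 2 := by positivity
  have key : (gaussDen ν σ ∘ ψ)
      = fun z : Fin d → ℝ => ∏ i, ((2 * π * σ ^ 2) ^ (-(1:ℝ)/2) * G σ (ν i) (z i)) := by
    funext z
    have hnorm : ‖ψ z - ν‖ ^ 2 = ∑ i, (z i - ν i) ^ 2 := by
      rw [norm_sq_euc]
      exact Finset.sum_congr rfl fun i _ => rfl
    simp only [Function.comp_apply, gaussDen, G]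
    rw [hnorm, Finset.prod_mul_distrib, Finset.prod_const, Finset.card_univ, Fintype.card_fin]
    have hC : (2 * π * σ ^ 2) ^ (-(d : ℝ) / 2)
        = ((2 * π * σ ^ 2) ^ (-(1:ℝ)/2)) ^ (d : ℕ) := by
      rw [← Real.rpow_natCast ((2 * π * σ ^ 2) ^ (-(1:ℝ)/2)) d, ← Real.rpow_mul hA.le]
      congr 1
      push_cast
      ring
    rw [hC]
    congr 1
    rw [← Real.exp_sum]
    congr 1
    rw [← Finset.sum_div, ← Finset.sum_neg_distrib]
  rw [key]
  exact Integrable.fintype_prod fun i => (integrable_G hσ (ν i)).const_mul _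

lemma integrable_ramp_gaussDen {d : ℕ} (hσ : 0 < σ) (w ν : Euc d) :
    Integrable (fun x : Euc d => ramp |(inner ℝ w x : ℝ)| * gaussDen ν σ x) := by
  apply Integrable.mono' (integrable_gaussDen hσ ν)
  · apply Continuous.aestronglyMeasurable
    have hinner : Continuous fun x : Euc d => (inner ℝ w x : ℝ) :=
      continuous_const.inner continuous_id
    exact ((ramp_continuous.comp continuous_abs).comp hinner).mul (gaussDen_continuous ν hσ)
  · filter_upwards with x
    rw [Real.norm_eq_abs, abs_mul, ramp_abs, abs_of_nonneg (tent_nonneg _),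
      abs_of_pos (gaussDen_pos hσ ν x)]
    calc tent (inner ℝ w x : ℝ) * gaussDen ν σ x ≤ 1 * gaussDen ν σ x :=
          mul_le_mul_of_nonneg_right (tent_le_one _) (gaussDen_pos hσ ν x).le
      _ = gaussDen ν σ x := one_mul _

lemma unlab_eq {d : ℕ} (hσ : 0 < σ) (hd : 0 < d) (w μ0 : Euc d) (hw : w ≠ 0) :
    unlabLoss w μ0 σ
      = (2 * π * σ ^ 2) ^ (-(1:ℝ)/2) * K σ ‖w‖ ((inner ℝ w μ0 : ℝ) / ‖w‖) := by
  rw [unlabLoss, gaussMix]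
  have hq : ∀ x : Euc d, 0 ≤ (gaussDen μ0 σ x + gaussDen (-μ0) σ x) / 2 := fun x => by
    have := gaussDen_pos hσ μ0 x; have := gaussDen_pos hσ (-μ0) x; linarith
  have hmeas : Measurable fun x : Euc d =>
      ((gaussDen μ0 σ x + gaussDen (-μ0) σ x) / 2).toNNReal := by
    apply Measurable.real_toNNReal
    exact (((gaussDen_continuous μ0 hσ).add (gaussDen_continuous (-μ0) hσ)).div_const 2).measurable
  rw [show (fun x : Euc d => ENNReal.ofReal ((gaussDen μ0 σ x + gaussDen (-μ0) σ x) / 2))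
      = fun x : Euc d =>
        (((gaussDen μ0 σ x + gaussDen (-μ0) σ x) / 2).toNNReal : ℝ≥0∞) from rfl]
  rw [integral_withDensity_eq_integral_smul hmeas]
  have hpt : ∀ x : Euc d,
      ((gaussDen μ0 σ x + gaussDen (-μ0) σ x) / 2).toNNReal • ramp |(inner ℝ w x : ℝ)|
        = (ramp |(inner ℝ w x : ℝ)| * gaussDen μ0 σ x
            + ramp |(inner ℝ w x : ℝ)| * gaussDen (-μ0) σ x) / 2 := by
    intro x
    rw [NNReal.smul_def, Real.coe_toNNReal _ (hq x), smul_eq_mul]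
    ring
  rw [integral_congr_ae (Filter.Eventually.of_forall hpt)]
  rw [integral_div, integral_add (integrable_ramp_gaussDen hσ w μ0)
    (integrable_ramp_gaussDen hσ w (-μ0))]
  rw [reduce hσ hd w μ0 hw, reduce hσ hd w (-μ0) hw]
  rw [inner_neg_right, show -(inner ℝ w μ0 : ℝ) / ‖w‖ = -((inner ℝ w μ0 : ℝ) / ‖w‖) by ring,
    K_even]
  ring

/-- `w* = μ/‖μ‖` is the strict minimizer of the unlabeled self-training loss over the set of
`w` with `‖w‖ ≤ 1` and `‖w - w*‖ < 1`. -/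
theorem stmt18 {d : ℕ} (μ : Euc d) (hμ : μ ≠ 0) (σ : ℝ) (hσ : 0 < σ)
    (w : Euc d) (hw1 : ‖w‖ ≤ 1) (hw2 : ‖w - ‖μ‖⁻¹ • μ‖ < 1) (hw3 : w ≠ ‖μ‖⁻¹ • μ) :
    unlabLoss (‖μ‖⁻¹ • μ) μ σ < unlabLoss w μ σ := by
  have hd : 0 < d := by
    rcases Nat.eq_zero_or_pos d with h0 | h
    · exfalso; subst h0; exact hμ (Subsingleton.elim μ 0)
    · exact h
  have hμ0 : 0 < ‖μ‖ := norm_pos_iff.mpr hμ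
  have hws_norm : ‖(‖μ‖⁻¹ • μ : Euc d)‖ = 1 := by
    rw [norm_smul, norm_inv, norm_norm, inv_mul_cancel₀ hμ0.ne']
  have hws_ne : (‖μ‖⁻¹ • μ : Euc d) ≠ 0 := by
    intro h; rw [h, norm_zero] at hws_norm; norm_num at hws_norm
  have hw_ne : w ≠ 0 := by
    intro h
    rw [h, zero_sub, norm_neg, hws_norm] at hw2
    exact lt_irrefl 1 hw2
  have hw0 : 0 < ‖w‖ := norm_pos_iff.mpr hw_ne
  have hip : 0 < (inner ℝ w μ : ℝ) := by
    have hsq := norm_sub_sq_real w (‖μ‖⁻¹ • μ)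
    have h1 : ‖w - ‖μ‖⁻¹ • μ‖ ^ 2 < 1 := by
      have h0 := norm_nonneg (w - ‖μ‖⁻¹ • μ)
      nlinarith
    rw [hws_norm] at hsq
    have h2 : (inner ℝ w (‖μ‖⁻¹ • μ) : ℝ) = ‖μ‖⁻¹ * (inner ℝ w μ : ℝ) :=
      real_inner_smul_right w μ _
    have hwsq : 0 < ‖w‖ ^ 2 := by positivity
    have h4 : 0 < (inner ℝ w (‖μ‖⁻¹ • μ) : ℝ) := by nlinarith
    rw [h2] at h4
    nlinarith [inv_pos.mpr hμ0]
  have hα_pos : 0 < (inner ℝ w μ : ℝ) / ‖w‖ := div_pos hip hw0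
  have hα_le : (inner ℝ w μ : ℝ) / ‖w‖ ≤ ‖μ‖ := by
    rw [div_le_iff₀ hw0]
    have := real_inner_le_norm w μ
    nlinarith [norm_nonneg w, norm_nonneg μ]
  have hcore : K σ 1 ‖μ‖ < K σ ‖w‖ ((inner ℝ w μ : ℝ) / ‖w‖) := by
    rcases lt_or_eq_of_le hw1 with hs | hs
    · calc K σ 1 ‖μ‖ < K σ ‖w‖ ‖μ‖ := K_one_lt hσ ‖μ‖ hw0 hs
        _ ≤ K σ ‖w‖ ((inner ℝ w μ : ℝ) / ‖w‖) := K_anti hσ hw0 hα_pos.le hα_le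
    · have hαlt : (inner ℝ w μ : ℝ) / ‖w‖ < ‖μ‖ := by
        rcases lt_or_eq_of_le hα_le with h | h
        · exact h
        · exfalso
          apply hw3
          have hie : (inner ℝ w μ : ℝ) = ‖w‖ * ‖μ‖ := by
            rw [div_eq_iff hw0.ne'] at h
            rw [h]; ring
          have hthis := inner_eq_norm_mul_iff_real.mp hie
          rw [hs, one_smul] at hthis
          have h5 := congrArg (fun v : Euc d => ‖μ‖⁻¹ • v) hthis
          rw [smul_smul, inv_mul_cancel₀ hμ0.ne', one_smul] at h5
          exact h5
      rw [hs] at hα_pos hαlt ⊢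
      exact K_strictAnti hσ one_pos hα_pos.le hαlt
  rw [unlab_eq hσ hd w μ hw_ne, unlab_eq hσ hd (‖μ‖⁻¹ • μ) μ hws_ne]
  have hinner_ws : (inner ℝ (‖μ‖⁻¹ • μ : Euc d) μ : ℝ) / ‖(‖μ‖⁻¹ • μ : Euc d)‖ = ‖μ‖ := by
    rw [hws_norm, div_one, real_inner_smul_left, real_inner_self_eq_norm_sq]
    field_simp
  rw [hinner_ws, hws_norm]
  have hA : (0:ℝ) < 2 * π * σ ^ 2 := by positivity
  exact mul_lt_mul_of_pos_left hcore (Real.rpow_pos_of_pos hA _)
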